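/- Let H be the constant positive matrix [[ρ/w, −cρ/w],[−cρ/w, ρ/w̃]] with det H = π²ρ² > 0 and w̃ = w/(π²w² + c²). If Q_a(t) solves J Q_a'(t) = a H Q_a(t), Q_a(0) = Id on [0,1], then for a ≠ b, (1/(a−b))·det(Q_a(1)e₁, Q_b(1)e₁) = sin(πρ(b−a))/(πw(b−a)). -/

import Mathlib

/-!
`M := J⁻¹H = -JH` is traceless with `det M = det H = (πρ)²`, so `M² = -(πρ)²` and every
solution is `Q_a(t) = e^{taM} = cos(aπρt) + sin(aπρt)/(πρ) · M`. The first columns of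
`c₁ + s₁M` and `c₂ + s₂M` have determinant `M₁₀ (c₁s₂ - c₂s₁)`; here this is
`M₁₀ sin(πρ(b - a))/(πρ)` by the subtraction formula, with `M₁₀ = -H₀₀ = -ρ/w`.
-/

open Matrix

theorem hasDerivAt_ccos_mul_ofReal (α : ℂ) (t : ℝ) :
    HasDerivAt (fun s : ℝ => Complex.cos (α * s)) (-Complex.sin (α * t) * α) t := by
  simpa using ((hasDerivAt_id (t : ℂ)).const_mul α).ccos.comp_ofReal

theorem hasDerivAt_csin_mul_ofReal (α : ℂ) (t : ℝ) :
    HasDerivAt (fun s : ℝ => Complex.sin (α * s)) (Complex.cos (α * t) * α) t := by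
  simpa using ((hasDerivAt_id (t : ℂ)).const_mul α).csin.comp_ofReal

section Components

variable {h₀₀ h₁₀ h₁₁ p a : ℂ} {u₀ u₁ : ℝ → ℂ}

/-- The system is `u' = aMu` with `M = [[h₁₀, h₁₁], [-h₀₀, -h₁₀]]`, `M² = -p²`; the two
quantities are the components of `p e^{-taM} u(t) = (p cos(apt) - sin(apt) M) u(t)`. -/
theorem canonicalSystem_components_first_integrals (hdet : h₀₀ * h₁₁ - h₁₀ ^ 2 = p ^ 2)
    (hu₀ : ∀ t, HasDerivAt u₀ (a * (h₁₀ * u₀ t + h₁₁ * u₁ t)) t)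
    (hu₁ : ∀ t, HasDerivAt u₁ (-a * (h₀₀ * u₀ t + h₁₀ * u₁ t)) t) (t : ℝ) :
    (p * Complex.cos (a * p * t) - Complex.sin (a * p * t) * h₁₀) * u₀ t
        - Complex.sin (a * p * t) * h₁₁ * u₁ t = p * u₀ 0 ∧
      Complex.sin (a * p * t) * h₀₀ * u₀ t
        + (p * Complex.cos (a * p * t) + Complex.sin (a * p * t) * h₁₀) * u₁ t = p * u₁ 0 := by
  have hcos := hasDerivAt_ccos_mul_ofReal (a * p)
  have hsin := hasDerivAt_csin_mul_ofReal (a * p)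
  have hconst₀ : ∀ s, HasDerivAt (fun s : ℝ => (p * Complex.cos (a * p * s)
      - Complex.sin (a * p * s) * h₁₀) * u₀ s - Complex.sin (a * p * s) * h₁₁ * u₁ s) 0 s := by
    intro s
    refine (((((hcos s).const_mul p).sub ((hsin s).mul_const h₁₀)).mul (hu₀ s)).sub
      (((hsin s).mul_const h₁₁).mul (hu₁ s))).congr_deriv ?_
    simp only [Pi.sub_apply]
    linear_combination (a * Complex.sin (a * p * s) * u₀ s) * hdet
  have hconst₁ : ∀ s, HasDerivAt (fun s : ℝ => Complex.sin (a * p * s) * h₀₀ * u₀ s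
      + (p * Complex.cos (a * p * s) + Complex.sin (a * p * s) * h₁₀) * u₁ s) 0 s := by
    intro s
    refine ((((hsin s).mul_const h₀₀).mul (hu₀ s)).add
      ((((hcos s).const_mul p).add ((hsin s).mul_const h₁₀)).mul (hu₁ s))).congr_deriv ?_
    simp only [Pi.add_apply]
    linear_combination (a * Complex.sin (a * p * s) * u₁ s) * hdet
  constructor
  · simpa using is_const_of_deriv_eq_zero (fun s => (hconst₀ s).differentiableAt)
      (fun s => (hconst₀ s).deriv) t 0
  · simpa using is_const_of_deriv_eq_zero (fun s => (hconst₁ s).differentiableAt)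
      (fun s => (hconst₁ s).deriv) t 0

theorem canonicalSystem_components_eq (hp : p ≠ 0) (hdet : h₀₀ * h₁₁ - h₁₀ ^ 2 = p ^ 2)
    (hu₀ : ∀ t, HasDerivAt u₀ (a * (h₁₀ * u₀ t + h₁₁ * u₁ t)) t)
    (hu₁ : ∀ t, HasDerivAt u₁ (-a * (h₀₀ * u₀ t + h₁₀ * u₁ t)) t) (t : ℝ) :
    u₀ t = Complex.cos (a * p * t) * u₀ 0
        + Complex.sin (a * p * t) / p * (h₁₀ * u₀ 0 + h₁₁ * u₁ 0) ∧
      u₁ t = Complex.cos (a * p * t) * u₁ 0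
        - Complex.sin (a * p * t) / p * (h₀₀ * u₀ 0 + h₁₀ * u₁ 0) := by
  obtain ⟨h₀, h₁⟩ := canonicalSystem_components_first_integrals hdet hu₀ hu₁ t
  have hpyth := Complex.sin_sq_add_cos_sq (a * p * t)
  constructor
  · field_simp
    refine mul_left_cancel₀ hp ?_
    linear_combination (p * Complex.cos (a * p * t) + Complex.sin (a * p * t) * h₁₀) * h₀
      + Complex.sin (a * p * t) * h₁₁ * h₁
      - Complex.sin (a * p * t) ^ 2 * u₀ t * hdet - p ^ 2 * u₀ t * hpyth
  · field_simp
    refine mul_left_cancel₀ hp ?_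
    linear_combination -Complex.sin (a * p * t) * h₀₀ * h₀
      + (p * Complex.cos (a * p * t) - Complex.sin (a * p * t) * h₁₀) * h₁
      - Complex.sin (a * p * t) ^ 2 * u₁ t * hdet - p ^ 2 * u₁ t * hpyth

end Components

section CanonicalSystem

variable {H : Matrix (Fin 2) (Fin 2) ℂ} {a : ℂ} {Q Q' : ℝ → Matrix (Fin 2) (Fin 2) ℂ}

theorem canonicalSystem_hasDerivAt_components (hsymm : H 0 1 = H 1 0)
    (hderiv : ∀ t i j, HasDerivAt (fun s => Q s i j) (Q' t i j) t)
    (hODE : ∀ t, !![0, -1; 1, 0] * Q' t = a • (H * Q t)) (j : Fin 2) (t : ℝ) :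
    HasDerivAt (fun s => Q s 0 j) (a * (H 1 0 * Q t 0 j + H 1 1 * Q t 1 j)) t ∧
      HasDerivAt (fun s => Q s 1 j) (-a * (H 0 0 * Q t 0 j + H 1 0 * Q t 1 j)) t := by
  have hrow₀ := congrFun (congrFun (hODE t) 0) j
  have hrow₁ := congrFun (congrFun (hODE t) 1) j
  simp only [Matrix.mul_apply, Fin.sum_univ_two, of_apply, cons_val', cons_val_fin_one,
    cons_val_zero, cons_val_one, zero_mul, neg_mul, one_mul, zero_add, add_zero,
    Matrix.smul_apply, smul_eq_mul, hsymm] at hrow₀ hrow₁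
  exact ⟨(hderiv t 0 j).congr_deriv hrow₁,
    (hderiv t 1 j).congr_deriv (by linear_combination -hrow₀)⟩

theorem canonicalSystem_eq_cos_add_sin {p : ℂ} (hp : p ≠ 0) (hsymm : H 0 1 = H 1 0)
    (hdet : H.det = p ^ 2) (hderiv : ∀ t i j, HasDerivAt (fun s => Q s i j) (Q' t i j) t)
    (hODE : ∀ t, !![0, -1; 1, 0] * Q' t = a • (H * Q t)) (t : ℝ) :
    Q t = (Complex.cos (a * p * t) • 1
      + (Complex.sin (a * p * t) / p) • -(!![0, -1; 1, 0] * H)) * Q 0 := by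
  have hdet' : H 0 0 * H 1 1 - H 1 0 ^ 2 = p ^ 2 := by
    rw [← hdet, Matrix.det_fin_two, hsymm]; ring
  ext i j
  have hentries := fun t => canonicalSystem_hasDerivAt_components hsymm hderiv hODE j t
  obtain ⟨h₀, h₁⟩ := canonicalSystem_components_eq hp hdet' (fun t => (hentries t).1)
    (fun t => (hentries t).2) t
  fin_cases i
  all_goals simp only [Fin.zero_eta, Fin.mk_one, Matrix.mul_apply, Fin.sum_univ_two, Matrix.add_apply,
    Matrix.smul_apply, Matrix.neg_apply, Matrix.one_apply_eq, Matrix.one_apply_ne, of_apply, cons_val',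
    cons_val_zero, cons_val_one, cons_val_fin_one, smul_eq_mul, ne_eq, zero_ne_one, one_ne_zero,
    not_false_eq_true]
  · rw [h₀]
    ring
  · rw [h₁, hsymm]
    ring

end CanonicalSystem

theorem det_col_zero_cos_smul_one_add_smul {R : Type*} [CommRing R]
    (N : Matrix (Fin 2) (Fin 2) R) (c₁ c₂ s₁ s₂ : R) :
    !![(c₁ • 1 + s₁ • N) 0 0, (c₂ • 1 + s₂ • N) 0 0;
      (c₁ • 1 + s₁ • N) 1 0, (c₂ • 1 + s₂ • N) 1 0].det = N 1 0 * (c₁ * s₂ - c₂ * s₁) := by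
  simp only [det_fin_two_of, Matrix.add_apply, Matrix.smul_apply, one_apply_eq, smul_eq_mul,
    one_apply_ne, ne_eq, one_ne_zero, not_false_eq_true]
  ring

/-- For the constant canonical system `J Q_a' = a H Q_a`, `Q_a(0) = Id`, with
`H = [[ρ/w, −cρ/w],[−cρ/w, ρ/w̃]]`, `w̃ = w/(π²w² + c²)`, one has
`(1/(a−b))·det(Q_a(1)e₁, Q_b(1)e₁) = sin(πρ(b−a))/(πw(b−a))`. -/
theorem stmt17 (ρ w c : ℝ) (hρ : 0 < ρ) (hw : 0 < w)
    (H : Matrix (Fin 2) (Fin 2) ℂ)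
    (hH : H = !![((ρ / w : ℝ) : ℂ), ((-(c * ρ / w) : ℝ) : ℂ);
                 ((-(c * ρ / w) : ℝ) : ℂ),
                 ((ρ * (Real.pi ^ 2 * w ^ 2 + c ^ 2) / w : ℝ) : ℂ)])
    (Q Q' : ℂ → ℝ → Matrix (Fin 2) (Fin 2) ℂ)
    (hQ0 : ∀ a, Q a 0 = 1)
    (hderiv : ∀ a t i j, HasDerivAt (fun s => Q a s i j) (Q' a t i j) t)
    (hODE : ∀ a t, (!![0, -1; 1, 0] : Matrix (Fin 2) (Fin 2) ℂ) * Q' a t =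
      a • (H * Q a t)) :
    ∀ a b : ℂ, a ≠ b →
      (a - b)⁻¹ * Matrix.det !![Q a 1 0 0, Q b 1 0 0; Q a 1 1 0, Q b 1 1 0] =
        Complex.sin ((Real.pi : ℂ) * (ρ : ℂ) * (b - a)) /
          ((Real.pi : ℂ) * (w : ℂ) * (b - a)) := by
  have hπ : (Real.pi : ℂ) ≠ 0 := Complex.ofReal_ne_zero.mpr Real.pi_ne_zero
  have hw' : (w : ℂ) ≠ 0 := Complex.ofReal_ne_zero.mpr hw.ne'
  have hρ' : (ρ : ℂ) ≠ 0 := Complex.ofReal_ne_zero.mpr hρ.ne'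
  have hp : (Real.pi : ℂ) * ρ ≠ 0 := mul_ne_zero hπ hρ'
  have hsymm : H 0 1 = H 1 0 := by simp [hH]
  have hdet : H.det = ((Real.pi : ℂ) * ρ) ^ 2 := by
    rw [hH, det_fin_two_of]; push_cast; field_simp; ring
  intro a b _
  have hQ1 : ∀ z, Q z 1 = Complex.cos (z * (Real.pi * ρ)) • 1
      + (Complex.sin (z * (Real.pi * ρ)) / (Real.pi * ρ)) • -(!![0, -1; 1, 0] * H) := fun z => by
    simpa [hQ0] using canonicalSystem_eq_cos_add_sin hp hsymm hdet (hderiv z) (hODE z) 1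
  have hJH : (-(!![0, -1; 1, 0] * H) : Matrix (Fin 2) (Fin 2) ℂ) 1 0 = -(ρ / w : ℂ) := by
    simp [hH]
  rw [hQ1 a, hQ1 b, det_col_zero_cos_smul_one_add_smul, hJH,
    show (Real.pi : ℂ) * ρ * (b - a) = b * (Real.pi * ρ) - a * (Real.pi * ρ) by ring,
    Complex.sin_sub]
  field_simp
  ring
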